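/- With the setup of the previous statement, define β₊ = max{0, β}. Then d = −D F + β₊ d_prev still satisfies ⟨F, d⟩ ≤ −c·‖F‖² with c = 1/u − 1/(4t) > 0, where in the case β₊ = 0 the stronger bound ⟨F, d⟩ ≤ −(1/u)·‖F‖² holds. -/

import Mathlib

/-! The direction `-D F` alone gives `⟪F, -D F⟫ ≤ -‖F‖² / u`, because every entry of `D` is at
least `1 / u`. The conjugate term `β * ⟪F, d_prev⟫` is a concave quadratic `x - t x² / ‖F‖²` in
`x = ⟪F, y⟫ ⟪F, d_prev⟫ / ‖F_prev‖²`, hence at most `‖F‖² / (4 t)`; truncating `β` at `0` keeps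
this bound, since it only replaces the term by `0` or leaves it unchanged. -/

open RealInnerProductSpace

lemma inv_mul_norm_sq_le_inner_of_diag {ι : Type*} [Fintype ι] {u : ℝ} {lam : ι → ℝ}
    (hpos : ∀ i, 0 < lam i) (hle : ∀ i, lam i ≤ u) {F DF : EuclideanSpace ℝ ι}
    (hDF : ∀ i, DF i = (lam i)⁻¹ * F i) :
    u⁻¹ * ‖F‖ ^ 2 ≤ ⟪F, DF⟫ := by
  rw [← real_inner_self_eq_norm_sq, PiLp.inner_apply, PiLp.inner_apply, Finset.mul_sum]
  refine Finset.sum_le_sum fun i _ => ?_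
  simp only [RCLike.inner_apply, conj_trivial, hDF i]
  have hinv : u⁻¹ ≤ (lam i)⁻¹ := inv_anti₀ (hpos i) (hle i)
  nlinarith [mul_le_mul_of_nonneg_right hinv (mul_self_nonneg (F i))]

lemma sub_mul_sq_div_le_div {t G : ℝ} (ht : 0 < t) (hG : 0 < G) (x : ℝ) :
    x - t * x ^ 2 / G ≤ G / (4 * t) := by
  rw [← sub_nonneg]
  have hsq : G / (4 * t) - (x - t * x ^ 2 / G) = (2 * t * x - G) ^ 2 / (4 * t * G) := by
    field_simp
    ring
  rw [hsq]
  positivity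

/-- The modified PRP parameter `β` of the conjugate direction `-D F + β d_prev`. -/
noncomputable def modifiedPRP {E : Type*} [NormedAddCommGroup E] [InnerProductSpace ℝ E]
    (t : ℝ) (F Fp y dp : E) : ℝ :=
  ⟪F, y⟫ / ‖Fp‖ ^ 2 - t * (⟪F, dp⟫ / ‖Fp‖ ^ 4) * (⟪F, y⟫ / ‖F‖) ^ 2

lemma modifiedPRP_mul_inner_le {E : Type*} [NormedAddCommGroup E] [InnerProductSpace ℝ E]
    {t : ℝ} (ht : 0 < t) {F : E} (hF : F ≠ 0) (Fp y dp : E) :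
    modifiedPRP t F Fp y dp * ⟪F, dp⟫ ≤ ‖F‖ ^ 2 / (4 * t) := by
  have hF2 : ‖F‖ ^ 2 ≠ 0 := by positivity
  have hquad : modifiedPRP t F Fp y dp * ⟪F, dp⟫ =
      ⟪F, y⟫ * ⟪F, dp⟫ / ‖Fp‖ ^ 2 - t * (⟪F, y⟫ * ⟪F, dp⟫ / ‖Fp‖ ^ 2) ^ 2 / ‖F‖ ^ 2 := by
    unfold modifiedPRP
    field_simp
  rw [hquad]
  exact sub_mul_sq_div_le_div ht (by positivity) _

lemma max_zero_mul_le_of_mul_le {β s c : ℝ} (h : β * s ≤ c) (hc : 0 ≤ c) :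
    max 0 β * s ≤ c := by
  rcases le_total s 0 with hs | hs
  · exact (mul_nonpos_of_nonneg_of_nonpos (le_max_left 0 β) hs).trans hc
  · rw [max_mul_of_nonneg _ _ hs, zero_mul]
    exact max_le hc h

theorem prp_plus_sufficient_descent_general (n : ℕ) (ℓ u t : ℝ) (hℓ : 0 < ℓ)
    (ht : u / 4 < t) (hu1 : 1 ≤ u)
    (lam : Fin n → ℝ) (hlow : ∀ i, ℓ ≤ lam i) (hhigh : ∀ i, lam i ≤ u)
    (F Fp y dp DF d : EuclideanSpace ℝ (Fin n)) (hF : F ≠ 0)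
    (hDF : ∀ i, DF i = (lam i)⁻¹ * F i)
    (β βp : ℝ)
    (hβ : β = (inner ℝ (F) (y) : ℝ) / ‖Fp‖ ^ 2 -
      t * ((inner ℝ (F) (dp) : ℝ) / ‖Fp‖ ^ 4) * ((inner ℝ (F) (y) : ℝ) / ‖F‖) ^ 2)
    (hβp : βp = max 0 β)
    (hd : d = -DF + βp • dp) :
    (0 < 1 / u - 1 / (4 * t)) ∧
    (inner ℝ (F) (d) : ℝ) ≤ -(1 / u - 1 / (4 * t)) * ‖F‖ ^ 2 ∧
    (βp = 0 → (inner ℝ (F) (d) : ℝ) ≤ -(1 / u) * ‖F‖ ^ 2) := by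
  have hu : 0 < u := zero_lt_one.trans_le hu1
  have ht0 : 0 < t := by linarith
  have hdiag : 1 / u * ‖F‖ ^ 2 ≤ ⟪F, DF⟫ := by
    rw [one_div]
    exact inv_mul_norm_sq_le_inner_of_diag (fun i => hℓ.trans_le (hlow i)) hhigh hDF
  have hconj : βp * ⟪F, dp⟫ ≤ 1 / (4 * t) * ‖F‖ ^ 2 := by
    rw [hβp, one_div_mul_eq_div]
    exact max_zero_mul_le_of_mul_le (hβ ▸ modifiedPRP_mul_inner_le ht0 hF Fp y dp)
      (by positivity)
  have hinner : ⟪F, d⟫ = -⟪F, DF⟫ + βp * ⟪F, dp⟫ := by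
    rw [hd, inner_add_right, inner_neg_right, real_inner_smul_right]
  refine ⟨?_, ?_, fun hβp0 => ?_⟩
  · exact sub_pos.mpr (one_div_lt_one_div_of_lt hu (by linarith))
  · rw [hinner]
    linarith
  · rw [hinner, hβp0, zero_mul]
    linarith

theorem prp_plus_sufficient_descent (n : ℕ) (ℓ u t : ℝ) (hℓ : 0 < ℓ) (hℓu : ℓ ≤ u)
    (ht : u / 4 < t) (hu1 : 1 ≤ u)
    (lam : Fin n → ℝ) (hlow : ∀ i, ℓ ≤ lam i) (hhigh : ∀ i, lam i ≤ u)
    (F Fp y dp DF d : EuclideanSpace ℝ (Fin n)) (hF : F ≠ 0) (hFp : Fp ≠ 0)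
    (hDF : ∀ i, DF i = (lam i)⁻¹ * F i)
    (β βp : ℝ)
    (hβ : β = (inner ℝ (F) (y) : ℝ) / ‖Fp‖ ^ 2 -
      t * ((inner ℝ (F) (dp) : ℝ) / ‖Fp‖ ^ 4) * ((inner ℝ (F) (y) : ℝ) / ‖F‖) ^ 2)
    (hβp : βp = max 0 β)
    (hd : d = -DF + βp • dp) :
    (0 < 1 / u - 1 / (4 * t)) ∧
    (inner ℝ (F) (d) : ℝ) ≤ -(1 / u - 1 / (4 * t)) * ‖F‖ ^ 2 ∧
    (βp = 0 → (inner ℝ (F) (d) : ℝ) ≤ -(1 / u) * ‖F‖ ^ 2) :=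
  prp_plus_sufficient_descent_general n ℓ u t hℓ ht hu1 lam hlow hhigh F Fp y dp DF d hF hDF β βp hβ
    hβp hd
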